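/- Under the local edit model applied to biased data, conditioned on the label flipping (y' = ¬y), the probability p_e(y'|x'_i) equals (2 - 2r_i + r_i e_i) / (2(2 - r_i)). -/
import Mathlib

/-- Conditioned on the label flipping, the post-edit conditional probability
`p_b(¬y | x_i)(1 - e) + p_b(¬y | ¬x_i) e` equals `(2 - 2r + r e) / (2(2 - r))`,
where `p_b(y | x_i) = 1/(2 - r)` and `p_b(y | ¬x_i) = 1/2`. -/
theorem stmt_7 (r e : ℝ) (hr : 0 ≤ r) (hr1 : r < 1) (he : 0 ≤ e) (he1 : e ≤ 1) :
    (1 - 1 / (2 - r)) * (1 - e) + (1 - 1 / 2) * e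
      = (2 - 2 * r + r * e) / (2 * (2 - r)) := by
  have h : (2 - r) ≠ 0 := by linarith
  field_simp
  ring
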